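/- arXiv:2210.00601 — 2 statements merged into one kernel-verified Lean document; each statement's English description precedes it below -/
import Mathlib

section
/- Suppose there exists (s,t,u,v) ∈ C(P,Q) with s² + t² > 1. Then there exist an angle α, scaling ρ > 1, and translation (u,v) such that the copy of P rotated by α, scaled by ρ, and translated by (u,v) is contained in Q; scaling this placement down by 1/ρ yields a congruent copy of P contained in the interior of Q (assuming Q contains the origin in its interior and the original inequalities are strict after the downscaling). -/
/-! The inequalities defining `C(P,Q)` say exactly that the image of `P` under the similarity
`(x, y) ↦ (x s - y t + u, x t + y s + v)` lies in `Q`. Writing `s + i t = ρ e^{iα}` in polar form,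
this similarity is a rotation by `α` scaled by `ρ = √(s² + t²) > 1`, followed by a translation.
Shrinking by `1/ρ` is a homothety centred at the origin with ratio `< 1`, and since `Q` is convex
with the origin in its interior, such a homothety maps `Q` into its interior. -/

open Real

lemma exists_polar_form (s t : ℝ) :
    ∃ α : ℝ, √(s ^ 2 + t ^ 2) * cos α = s ∧ √(s ^ 2 + t ^ 2) * sin α = t := by
  refine ⟨Complex.arg ⟨s, t⟩, ?_, ?_⟩
  · simpa [Complex.norm_eq_sqrt_sq_add_sq] using Complex.norm_mul_cos_arg ⟨s, t⟩
  · simpa [Complex.norm_eq_sqrt_sq_add_sq] using Complex.norm_mul_sin_arg ⟨s, t⟩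

lemma convex_setOf_forall_mul_fst_add_mul_snd_le {ι : Type*} (a b : ι → ℝ) (c : ℝ) :
    Convex ℝ {q : ℝ × ℝ | ∀ j, a j * q.1 + b j * q.2 ≤ c} := by
  intro p hp q hq μ ν hμ hν hμν j
  calc a j * (μ • p + ν • q).1 + b j * (μ • p + ν • q).2
      = μ * (a j * p.1 + b j * p.2) + ν * (a j * q.1 + b j * q.2) := by
        simp only [Prod.fst_add, Prod.snd_add, Prod.smul_fst, Prod.smul_snd, smul_eq_mul]; ring
    _ ≤ μ * c + ν * c := by gcongr <;> [exact hp j; exact hq j]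
    _ = c := by rw [← add_mul, hμν, one_mul]

lemma Convex.smul_mem_interior_of_zero_mem_interior {𝕜 E : Type*} [Field 𝕜] [LinearOrder 𝕜]
    [IsStrictOrderedRing 𝕜] [AddCommGroup E] [Module 𝕜 E] [TopologicalSpace E]
    [IsTopologicalAddGroup E] [ContinuousConstSMul 𝕜 E] {s : Set E} (hs : Convex 𝕜 s)
    (h0 : 0 ∈ interior s) {x : E} (hx : x ∈ s) {c : 𝕜} (hc₀ : 0 ≤ c) (hc₁ : c < 1) :
    c • x ∈ interior s := by
  simpa using hs.combo_interior_self_mem_interior h0 hx (sub_pos.2 hc₁) hc₀ (sub_add_cancel 1 c)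

/-- If some `(s,t,u,v) ∈ C(P,Q)` has `s² + t² > 1`, then `P` rotated by some `α`,
scaled by some `ρ > 1` and translated fits in `Q`, and scaling that placement down by
`1/ρ` puts a congruent copy of `P` in the interior of `Q`. -/
theorem stmt_14 (m n : ℕ) (x y : Fin m → ℝ) (a b : Fin n → ℝ)
    (Q : Set (ℝ × ℝ)) (hQ : Q = {q : ℝ × ℝ | ∀ j : Fin n, a j * q.1 + b j * q.2 ≤ 1})
    (h0 : (0, 0) ∈ interior Q)
    (h : ∃ s t u v : ℝ,
      (∀ (i : Fin m) (j : Fin n),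
        (a j * x i + b j * y i) * s + (b j * x i - a j * y i) * t +
          a j * u + b j * v ≤ 1) ∧ 1 < s ^ 2 + t ^ 2) :
    ∃ (α ρ u v : ℝ), 1 < ρ ∧
      (∀ i : Fin m,
        (x i * (ρ * Real.cos α) - y i * (ρ * Real.sin α) + u,
         x i * (ρ * Real.sin α) + y i * (ρ * Real.cos α) + v) ∈ Q) ∧
      (∀ i : Fin m,
        (x i * Real.cos α - y i * Real.sin α + u / ρ,
         x i * Real.sin α + y i * Real.cos α + v / ρ) ∈ interior Q) := by
  obtain ⟨s, t, u, v, hC, hst⟩ := h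
  obtain ⟨α, hcos, hsin⟩ := exists_polar_form s t
  set ρ := √(s ^ 2 + t ^ 2)
  have hρ : 1 < ρ := Real.lt_sqrt_of_sq_lt (by simpa using hst)
  have hplaced : ∀ i, (x i * (ρ * cos α) - y i * (ρ * sin α) + u,
      x i * (ρ * sin α) + y i * (ρ * cos α) + v) ∈ Q := by
    intro i
    rw [hQ, hcos, hsin]
    intro j
    linear_combination hC i j
  refine ⟨α, ρ, u, v, hρ, hplaced, fun i => ?_⟩
  have hQconv : Convex ℝ Q := hQ ▸ convex_setOf_forall_mul_fst_add_mul_snd_le a b 1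
  convert hQconv.smul_mem_interior_of_zero_mem_interior h0 (hplaced i)
    (inv_nonneg.2 (zero_le_one.trans hρ.le)) (inv_lt_one_of_one_lt₀ hρ) using 1
  ext <;> simp only [Prod.smul_fst, Prod.smul_snd, smul_eq_mul] <;> field_simp
end

section
/- The unit cube in ℝ³ has the Rupert property: there exist angles θ_p, φ_p, θ_q, φ_q, a rotation angle α, and a translation (u,v) such that (T_{u,v} ∘ R_α ∘ M_{θ_p,φ_p})(C) is contained in the interior of the convex hull of M_{θ_q,φ_q}(C), where C is the set of 8 vertices of the unit cube. -/
/-- The 2×3 projection matrix `M θ φ`. -/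
noncomputable def M (θ φ : ℝ) : Matrix (Fin 2) (Fin 3) ℝ :=
  !![-Real.sin θ, Real.cos θ, 0;
     -Real.cos θ * Real.cos φ, -Real.sin θ * Real.cos φ, Real.sin φ]

/-- The planar rotation matrix `R α`. -/
noncomputable def R (α : ℝ) : Matrix (Fin 2) (Fin 2) ℝ :=
  !![Real.cos α, -Real.sin α; Real.sin α, Real.cos α]

/-- `T_{u,v} ∘ R_α ∘ M_{θ,φ} : ℝ³ → ℝ²`. -/
noncomputable def transform (θ φ α u v : ℝ) (x : Fin 3 → ℝ) : Fin 2 → ℝ :=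
  (R α).mulVec ((M θ φ).mulVec x) + ![u, v]

/-- The set of the 8 vertices of the unit cube. -/
def cube : Set (Fin 3 → ℝ) := {p | ∀ i, p i = 0 ∨ p i = 1}

/-!
Project the cube straight down onto the unit square `{0,1}²` and, for the second projection,
take the direction `(48, 36, 25) / 65`, whose projection matrix is rational. Every vertex of the
translated square is the second projection of a point of the *open* solid cube, and a surjective
linear map is open, so it lands in the interior of the hexagonal shadow of the cube.
-/

open Real Set Matrix

lemma cos_arcsin_of_sq_add_sq {a b : ℝ} (h : a ^ 2 + b ^ 2 = 1) (hb : 0 ≤ b) :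
    cos (arcsin a) = b := by
  rw [cos_arcsin, show 1 - a ^ 2 = b ^ 2 by linarith, sqrt_sq hb]

lemma sin_arcsin_of_sq_add_sq {a b : ℝ} (h : a ^ 2 + b ^ 2 = 1) : sin (arcsin a) = a :=
  sin_arcsin (by nlinarith [sq_nonneg (a + 1), sq_nonneg b])
    (by nlinarith [sq_nonneg (a - 1), sq_nonneg b])

lemma M_arcsin_arcsin {a b c d : ℝ} (hab : a ^ 2 + b ^ 2 = 1) (hb : 0 ≤ b)
    (hcd : c ^ 2 + d ^ 2 = 1) (hd : 0 ≤ d) :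
    M (arcsin a) (arcsin c) = !![-a, b, 0; -b * d, -a * d, c] := by
  rw [M, sin_arcsin_of_sq_add_sq hab, cos_arcsin_of_sq_add_sq hab hb,
    sin_arcsin_of_sq_add_sq hcd, cos_arcsin_of_sq_add_sq hcd hd]

lemma M_mul_transpose (θ φ : ℝ) : M θ φ * (M θ φ)ᵀ = 1 := by
  ext i j
  fin_cases i <;> fin_cases j <;>
    simp [M, mul_apply, Fin.sum_univ_three] <;>
    nlinarith [sin_sq_add_cos_sq θ, sin_sq_add_cos_sq φ]

lemma M_mulVec_surjective (θ φ : ℝ) : Function.Surjective (M θ φ).mulVec := fun y =>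
  ⟨(M θ φ)ᵀ *ᵥ y, by rw [mulVec_mulVec, M_mul_transpose, one_mulVec]⟩

lemma transform_zero (u v : ℝ) (x : Fin 3 → ℝ) :
    transform 0 0 0 u v x = ![x 1 + u, -x 0 + v] := by
  ext i
  fin_cases i <;> simp [transform, M, R, dotProduct, Fin.sum_univ_three]

lemma cube_eq_pi : cube = univ.pi fun _ => ({0, 1} : Set ℝ) := by
  ext p
  simp [cube]

lemma convexHull_cube : convexHull ℝ cube = univ.pi fun _ => Icc 0 1 := by
  rw [cube_eq_pi, convexHull_pi]
  simp_rw [convexHull_pair, segment_eq_Icc zero_le_one]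

lemma mulVec_mem_interior_convexHull_image_cube {m : Type*} [Fintype m]
    {A : Matrix m (Fin 3) ℝ} (hA : Function.Surjective A.mulVec) {p : Fin 3 → ℝ}
    (hp : ∀ i, p i ∈ Ioo 0 1) : A *ᵥ p ∈ interior (convexHull ℝ (A.mulVec '' cube)) := by
  have hopen : IsOpenMap A.mulVec := A.mulVecLin.isOpenMap_of_finiteDimensional hA
  have hhull : convexHull ℝ (A.mulVec '' cube) = A.mulVec '' convexHull ℝ cube :=
    (A.mulVecLin.image_convexHull cube).symm
  rw [hhull]
  refine hopen.image_interior_subset _ ⟨p, ?_, rfl⟩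
  rw [convexHull_cube, interior_pi_set finite_univ]
  simpa [interior_Icc] using hp

/-- The unit cube is Rupert. -/
theorem stmt_17 :
    ∃ θp φp θq φq α u v : ℝ,
      transform θp φp α u v '' cube ⊆
        interior (convexHull ℝ ((M θq φq).mulVec '' cube)) := by
  refine ⟨0, 0, arcsin (3/5), arcsin (12/13), 0, -101/250, 89/130, ?_⟩
  rintro _ ⟨x, hx, rfl⟩
  have hM : M (arcsin (3/5)) (arcsin (12/13)) = !![-3/5, 4/5, 0; -4/13, -3/13, 12/13] := by
    rw [M_arcsin_arcsin (b := 4/5) (d := 5/13)] <;> norm_num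
  -- The `x 0`-coefficient of `p` is the preimage `(4/13, 3/13, -12/13)` of `(0, -1)` shifted by
  -- `-(48, 36, 25)/500` along the kernel, which is what keeps every coordinate inside `(0, 1)`.
  set p : Fin 3 → ℝ := ![7/10 + 344/1625 * x 0 - 3/5 * x 1, 1/50 + 258/1625 * x 0 + 4/5 * x 1,
    49/50 - 253/260 * x 0] with hp
  have hproj :
      transform 0 0 0 (-101/250) (89/130) x = M (arcsin (3/5)) (arcsin (12/13)) *ᵥ p := by
    rw [transform_zero, hM]
    ext i
    fin_cases i <;> simp [hp, mulVec, dotProduct, Fin.sum_univ_three] <;> ring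
  rw [hproj]
  refine mulVec_mem_interior_convexHull_image_cube (M_mulVec_surjective _ _) fun i => ?_
  rcases hx 0 with h0 | h0 <;> rcases hx 1 with h1 | h1 <;>
    fin_cases i <;> simp [hp, h0, h1] <;> norm_num
end
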